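/- Let V be an open sector at 0 in ℂ and let χ be a Puiseux polynomial of u⁻¹ without constant term, regarded as a holomorphic function on V via the fixed branch of log. Then: (i) if Re χ(u) ≤ 0 for all u ∈ V, then |e^{χ(u)}| ≤ 1 for all u ∈ V, so e^χ has moderate growth on V; (ii) if Re χ(u) > 0 for all u ∈ V, then along every ray {s·e^{iθ} : 0 < s < r} contained in V the function s ↦ Re χ(s e^{iθ}) tends to +∞ as s → 0+, and e^χ does not have moderate growth on V: for all C > 0 and M > 0 there exists u ∈ V with |e^{χ(u)}| > C·|u|^{−M}. -/

import Mathlib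

open Filter Set Topology

/-- A Puiseux polynomial of `u⁻¹` without constant term: a finitely supported
family of complex coefficients indexed by rationals, all of whose support
consists of negative rationals.  Two such are equal iff all coefficients agree. -/
structure PuiseuxPoly where
  coeff : ℚ →₀ ℂ
  support_neg : ∀ a ∈ coeff.support, a < 0

/-- Evaluation of a Puiseux polynomial at the point `u = s·e^{iθ}` (with `s > 0`)
of a sector, via the fixed branch of `log` given by `log u = log s + iθ`,
so that `u^a = exp (a · (log s + iθ))`. -/
noncomputable def PuiseuxPoly.eval (χ : PuiseuxPoly) (s θ : ℝ) : ℂ :=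
  χ.coeff.sum fun a c =>
    c * Complex.exp ((a : ℂ) * ((Real.log s : ℂ) + (θ : ℂ) * Complex.I))

/-- A function on the open sector `V = {s·e^{iθ} : 0 < s < r, α < θ < β}`
(written in the coordinates `(s, θ)`) has moderate growth on `V` if there are
`C > 0` and `M > 0` with `|g(u)| ≤ C·|u|^{-M}` on `V`. -/
def ModerateGrowthOn (r α β : ℝ) (g : ℝ → ℝ → ℂ) : Prop :=
  ∃ C M : ℝ, 0 < C ∧ 0 < M ∧ ∀ s θ : ℝ, s ∈ Set.Ioo 0 r → θ ∈ Set.Ioo α β →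
    ‖g s θ‖ ≤ C * s ^ (-M)

theorem keylem (T : Finset ℚ) (hT : ∀ a ∈ T, a < 0) (d : ℚ → ℝ) (r : ℝ) (hr : 0 < r)
    (hpos : ∀ s ∈ Set.Ioo (0:ℝ) r, 0 < ∑ a ∈ T, d a * s ^ (a:ℝ)) (M : ℝ) :
    Tendsto (fun s => (∑ a ∈ T, d a * s ^ (a:ℝ)) + M * Real.log s) (𝓝[>] (0:ℝ)) atTop := by
  classical
  set T' : Finset ℚ := T.filter (fun a => d a ≠ 0) with hT'
  have hsub : T' ⊆ T := Finset.filter_subset _ _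
  have hsum : ∀ s : ℝ, (∑ a ∈ T, d a * s ^ (a:ℝ)) = ∑ a ∈ T', d a * s ^ (a:ℝ) := by
    intro s
    refine (Finset.sum_subset hsub ?_).symm
    intro a ha hna
    have : d a = 0 := by
      by_contra h
      exact hna (Finset.mem_filter.mpr ⟨ha, h⟩)
    simp [this]
  have hne : T'.Nonempty := by
    by_contra h
    have h0 := hpos (r/2) ⟨by linarith, by linarith⟩
    rw [hsum, Finset.not_nonempty_iff_eq_empty.mp h] at h0
    simp at h0
  set a0 : ℚ := T'.min' hne with ha0def
  have ha0T' : a0 ∈ T' := T'.min'_mem hne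
  have ha0d : d a0 ≠ 0 := (Finset.mem_filter.mp ha0T').2
  have ha0neg : (a0:ℝ) < 0 := by exact_mod_cast hT a0 (hsub ha0T')
  set b : ℝ := -(a0:ℝ) with hbdef
  have hb : 0 < b := by simp only [hbdef]; linarith
  set G : ℝ → ℝ := fun s => ∑ a ∈ T', d a * s ^ ((a:ℝ) - (a0:ℝ)) with hGdef
  have hGsplit : ∀ s : ℝ, 0 < s → (∑ a ∈ T', d a * s ^ (a:ℝ)) = s ^ (a0:ℝ) * G s := by
    intro s hs
    rw [hGdef]
    simp only [Finset.mul_sum]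
    refine Finset.sum_congr rfl fun a _ => ?_
    rw [← mul_assoc, mul_comm (s ^ (a0:ℝ)) (d a), mul_assoc, ← Real.rpow_add hs]
    ring_nf
  have hGtend : Tendsto G (𝓝[>] (0:ℝ)) (𝓝 (d a0)) := by
    have h : Tendsto G (𝓝[>] (0:ℝ)) (𝓝 (∑ a ∈ T', if a = a0 then d a0 else 0)) := by
      apply tendsto_finset_sum
      intro a ha
      by_cases h : a = a0
      · simp only [if_pos h, h, sub_self]
        have he : ∀ᶠ s in 𝓝[>] (0:ℝ), d a0 = d a0 * s ^ (0:ℝ) := by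
          filter_upwards [self_mem_nhdsWithin] with s _
          simp [Real.rpow_zero]
        exact Tendsto.congr' he tendsto_const_nhds
      · have hlt : (0:ℝ) < (a:ℝ) - (a0:ℝ) := by
          have h1 : a0 ≤ a := T'.min'_le a ha
          have h2 : a0 < a := lt_of_le_of_ne h1 (Ne.symm h)
          have h3 := (Rat.cast_lt (K := ℝ)).mpr h2
          linarith
        simp only [if_neg h]
        have hcont : ContinuousAt (fun s : ℝ => s ^ ((a:ℝ) - (a0:ℝ))) 0 :=
          Real.continuousAt_rpow_const 0 _ (Or.inr hlt.le)
        have h4 := hcont.tendsto.mono_left (nhdsWithin_le_nhds (s := Set.Ioi (0:ℝ)))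
        rw [Real.zero_rpow hlt.ne'] at h4
        simpa using h4.const_mul (d a)
    simpa [Finset.sum_ite_eq' T' a0, ha0T'] using h
  have hGpos : ∀ᶠ s in 𝓝[>] (0:ℝ), 0 < G s := by
    filter_upwards [Ioo_mem_nhdsGT hr] with s hs
    have hF := hpos s hs
    rw [hsum, hGsplit s hs.1] at hF
    have hp := Real.rpow_pos_of_pos hs.1 (a0:ℝ)
    nlinarith
  have hd0pos : 0 < d a0 := by
    have h0 : (0:ℝ) ≤ d a0 := ge_of_tendsto hGtend (hGpos.mono fun s hs => hs.le)
    exact lt_of_le_of_ne h0 (Ne.symm ha0d)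
  -- x ^ a0 → atTop
  have hrb : Tendsto (fun s : ℝ => s ^ b) (𝓝[>] (0:ℝ)) (𝓝[>] (0:ℝ)) := by
    apply tendsto_nhdsWithin_of_tendsto_nhds_of_eventually_within
    · have hcont : ContinuousAt (fun s : ℝ => s ^ b) 0 :=
        Real.continuousAt_rpow_const 0 _ (Or.inr hb.le)
      have h4 := hcont.tendsto.mono_left (nhdsWithin_le_nhds (s := Set.Ioi (0:ℝ)))
      rwa [Real.zero_rpow hb.ne'] at h4
    · filter_upwards [self_mem_nhdsWithin] with s hs
      exact Real.rpow_pos_of_pos hs b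
  have houter : Tendsto (fun s : ℝ => s ^ (a0:ℝ)) (𝓝[>] (0:ℝ)) atTop := by
    have h5 := tendsto_inv_nhdsGT_zero.comp hrb
    refine h5.congr' ?_
    filter_upwards [self_mem_nhdsWithin] with s hs
    simp only [Function.comp_apply]
    rw [← Real.rpow_neg (le_of_lt hs), hbdef, neg_neg]
  have hinner : Tendsto (fun s : ℝ => G s + M * (Real.log s * s ^ b)) (𝓝[>] (0:ℝ))
      (𝓝 (d a0)) := by
    have h6 := (tendsto_log_mul_rpow_nhdsGT_zero hb).const_mul M
    have := hGtend.add h6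
    simpa using this
  have hmain := houter.atTop_mul_pos hd0pos hinner
  refine hmain.congr' ?_
  filter_upwards [self_mem_nhdsWithin] with s hs
  rw [mul_add, ← hGsplit s hs, ← hsum]
  congr 1
  rw [← mul_assoc]
  have : s ^ (a0:ℝ) * M * (Real.log s * s ^ b) = (M * Real.log s) * (s ^ (a0:ℝ) * s ^ b) := by
    ring
  rw [this, ← Real.rpow_add hs]
  simp [hbdef]

theorem eval_re (χ : PuiseuxPoly) {s : ℝ} (hs : 0 < s) (θ : ℝ) :
    (χ.eval s θ).re = ∑ a ∈ χ.coeff.support,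
      (χ.coeff a * Complex.exp ((((a:ℝ) * θ : ℝ) : ℂ) * Complex.I)).re * s ^ (a:ℝ) := by
  rw [PuiseuxPoly.eval, Finsupp.sum, Complex.re_sum]
  refine Finset.sum_congr rfl fun a _ => ?_
  have h1 : (a:ℂ) * ((Real.log s : ℂ) + (θ:ℂ) * Complex.I)
      = (((a:ℝ) * Real.log s : ℝ) : ℂ) + (((a:ℝ) * θ : ℝ) : ℂ) * Complex.I := by
    push_cast; ring
  rw [h1, Complex.exp_add, ← Complex.ofReal_exp]
  rw [Real.rpow_def_of_pos hs, mul_comm (Real.log s) (a:ℝ)]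
  set R := Real.exp ((a:ℝ) * Real.log s)
  set E := Complex.exp ((((a:ℝ) * θ : ℝ) : ℂ) * Complex.I)
  rw [show χ.coeff a * ((R:ℂ) * E) = (χ.coeff a * E) * (R:ℂ) by ring]
  simp [Complex.mul_re]

/-- Let `χ` be a Puiseux polynomial of `u⁻¹` without constant term on the
open sector `V = {s·e^{iθ} : 0 < s < r, α < θ < β}`.
(i) If `Re χ ≤ 0` on `V`, then `|e^χ| ≤ 1` on `V`, and `e^χ` has moderate
growth on `V`.
(ii) If `Re χ > 0` on `V`, then along every ray `{s·e^{iθ} : 0 < s < r} ⊆ V`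
the function `s ↦ Re χ(s·e^{iθ})` tends to `+∞` as `s → 0⁺`, and `e^χ` does not
have moderate growth on `V`: for every `C > 0` and `M > 0` there is a point
`u = s·e^{iθ}` of `V` with `|e^{χ(u)}| > C·|u|^{-M}`. -/
theorem statement5 (r α β : ℝ) (hr : 0 < r) (hαβ : α < β)
    (hsec : β - α ≤ 2 * Real.pi) (χ : PuiseuxPoly) :
    ((∀ s θ : ℝ, s ∈ Set.Ioo 0 r → θ ∈ Set.Ioo α β → (χ.eval s θ).re ≤ 0) →
      (∀ s θ : ℝ, s ∈ Set.Ioo 0 r → θ ∈ Set.Ioo α β →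
        ‖Complex.exp (χ.eval s θ)‖ ≤ 1) ∧
      ModerateGrowthOn r α β (fun s θ => Complex.exp (χ.eval s θ))) ∧
    ((∀ s θ : ℝ, s ∈ Set.Ioo 0 r → θ ∈ Set.Ioo α β → 0 < (χ.eval s θ).re) →
      (∀ θ ∈ Set.Ioo α β,
        Tendsto (fun s : ℝ => (χ.eval s θ).re) (nhdsWithin 0 (Set.Ioi 0)) atTop) ∧
      ∀ C M : ℝ, 0 < C → 0 < M → ∃ s θ : ℝ, s ∈ Set.Ioo 0 r ∧ θ ∈ Set.Ioo α β ∧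
        C * s ^ (-M) < ‖Complex.exp (χ.eval s θ)‖) := by
  constructor
  · intro h
    have hb : ∀ s θ : ℝ, s ∈ Set.Ioo 0 r → θ ∈ Set.Ioo α β →
        ‖Complex.exp (χ.eval s θ)‖ ≤ 1 := by
      intro s θ hs hθ
      rw [Complex.norm_exp]
      exact Real.exp_le_one_iff.mpr (h s θ hs hθ)
    refine ⟨hb, max r 1, 1, by positivity, one_pos, ?_⟩
    intro s θ hs hθ
    have h1 := hb s θ hs hθ
    have h2 : (1:ℝ) ≤ max r 1 * s ^ (-(1:ℝ)) := by
      rw [Real.rpow_neg_one]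
      have hs0 : 0 < s := hs.1
      have : (1:ℝ) ≤ r * s⁻¹ := by
        rw [show r * s⁻¹ = r / s by ring]
        exact (one_le_div hs0).mpr hs.2.le
      calc (1:ℝ) ≤ r * s⁻¹ := this
        _ ≤ max r 1 * s⁻¹ := by
            apply mul_le_mul_of_nonneg_right (le_max_left r 1) (by positivity)
    exact h1.trans h2
  · intro h
    have key : ∀ θ ∈ Set.Ioo α β, ∀ M : ℝ,
        Tendsto (fun s : ℝ => (∑ a ∈ χ.coeff.support,
          (χ.coeff a * Complex.exp ((((a:ℝ) * θ : ℝ) : ℂ) * Complex.I)).re * s ^ (a:ℝ))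
          + M * Real.log s) (𝓝[>] (0:ℝ)) atTop := by
      intro θ hθ M
      refine keylem χ.coeff.support χ.support_neg _ r hr ?_ M
      intro s hs
      rw [← eval_re χ hs.1 θ]
      exact h s θ hs hθ
    constructor
    · intro θ hθ
      have h0 := key θ hθ 0
      simp only [zero_mul, add_zero] at h0
      refine h0.congr' ?_
      filter_upwards [self_mem_nhdsWithin] with s hs
      exact (eval_re χ hs θ).symm
    · intro C M hC hM
      set θ0 := (α + β) / 2 with hθ0def
      have hθ0 : θ0 ∈ Set.Ioo α β := ⟨by simp only [hθ0def]; linarith, by simp only [hθ0def]; linarith⟩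
      have htop := key θ0 hθ0 M
      have hev := htop.eventually_gt_atTop (Real.log C)
      obtain ⟨s, hgt, hsIoo⟩ := (hev.and (Ioo_mem_nhdsGT hr)).exists
      refine ⟨s, θ0, hsIoo, hθ0, ?_⟩
      have hs0 : 0 < s := hsIoo.1
      rw [Complex.norm_exp, eval_re χ hs0 θ0]
      have hrw : C * s ^ (-M) = Real.exp (Real.log C + (-M) * Real.log s) := by
        rw [Real.exp_add, Real.rpow_def_of_pos hs0, Real.exp_log hC, mul_comm (Real.log s) (-M)]
      rw [hrw]
      apply Real.exp_lt_exp.mpr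
      linarith
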